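/- For p ≥ 2, integer k ≥ 0, and E_∞ = 2√((p-1)/p), the function Θ_{k,p} defined by Θ_{k,p}(u) = (1/2)log(p-1) - ((p-2)/(4(p-1)))u² - (k+1)I₁(u) for u ≤ -E_∞ and Θ_{k,p}(u) = (1/2)log(p-1) - (p-2)/p for u ≥ -E_∞, is continuous and non-decreasing on ℝ, with maximal value (1/2)log(p-1) - (p-2)/p. -/

import Mathlib

open Real Set

noncomputable def Einf (p : ℕ) : ℝ := 2 * Real.sqrt ((p - 1) / p)

noncomputable def rateI1 (p : ℕ) (u : ℝ) : ℝ :=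
  -(u / (Einf p) ^ 2) * Real.sqrt (u ^ 2 - (Einf p) ^ 2)
    - Real.log (-u + Real.sqrt (u ^ 2 - (Einf p) ^ 2)) + Real.log (Einf p)

/-- The complexity function `Θ_{k,p}`. -/
noncomputable def ThetaK (p k : ℕ) (u : ℝ) : ℝ :=
  if u ≤ -(Einf p) then
    (1 / 2) * Real.log (p - 1) - ((p - 2) / (4 * (p - 1))) * u ^ 2 - (k + 1) * rateI1 p u
  else (1 / 2) * Real.log (p - 1) - (p - 2) / p

noncomputable def auxF (C a K E u : ℝ) : ℝ :=
  C - a * u ^ 2 - K * (-(u / E ^ 2) * Real.sqrt (u ^ 2 - E ^ 2)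
    - Real.log (-u + Real.sqrt (u ^ 2 - E ^ 2)) + Real.log E)

lemma auxF_contOn (C a K E : ℝ) (hE : 0 < E) : ContinuousOn (auxF C a K E) (Iic (-E)) := by
  have hcs : Continuous fun u : ℝ => Real.sqrt (u ^ 2 - E ^ 2) :=
    ((continuous_pow 2).sub continuous_const).sqrt
  have hpos : ∀ x ∈ Iic (-E), 0 < -x + Real.sqrt (x ^ 2 - E ^ 2) := by
    intro x hx
    have := Real.sqrt_nonneg (x ^ 2 - E ^ 2)
    simp only [mem_Iic] at hx
    linarith
  have hlog : ContinuousOn (fun u => Real.log (-u + Real.sqrt (u ^ 2 - E ^ 2))) (Iic (-E)) :=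
    ContinuousOn.log ((continuous_neg.add hcs).continuousOn) (fun x hx => (hpos x hx).ne')
  apply ContinuousOn.sub
    (ContinuousOn.sub continuousOn_const (continuousOn_const.mul (continuous_pow 2).continuousOn))
  apply ContinuousOn.mul continuousOn_const
  exact (((((continuous_id.div_const _).neg.mul hcs).continuousOn).sub hlog).add continuousOn_const)

lemma auxF_hasDerivAt (C a K E x : ℝ) (hE : 0 < E) (hx : x < -E) :
    HasDerivAt (auxF C a K E) (2 * K * Real.sqrt (x ^ 2 - E ^ 2) / E ^ 2 - 2 * a * x) x := by
  have hs : 0 < x ^ 2 - E ^ 2 := by nlinarith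
  set s := Real.sqrt (x ^ 2 - E ^ 2) with hsdef
  have hs0 : 0 < s := Real.sqrt_pos.mpr hs
  have hs2 : s ^ 2 = x ^ 2 - E ^ 2 := Real.sq_sqrt hs.le
  have hg : 0 < -x + s := by linarith
  have h1 : HasDerivAt (fun u : ℝ => u ^ 2 - E ^ 2) (2 * x) x := by
    simpa using (hasDerivAt_pow 2 x).sub_const (E ^ 2)
  have h2 : HasDerivAt (fun u : ℝ => Real.sqrt (u ^ 2 - E ^ 2)) (x / s) x := by
    have := (Real.hasDerivAt_sqrt hs.ne').comp x h1
    refine this.congr_deriv ?_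
    rw [← hsdef]
    field_simp
  have h3 : HasDerivAt (fun u : ℝ => -(u / E ^ 2) * Real.sqrt (u ^ 2 - E ^ 2))
      (-(1 / E ^ 2) * s + -(x / E ^ 2) * (x / s)) x :=
    (((hasDerivAt_id x).div_const (E ^ 2)).neg).mul h2
  have h4 : HasDerivAt (fun u : ℝ => -u + Real.sqrt (u ^ 2 - E ^ 2)) (-1 + x / s) x :=
    (hasDerivAt_id x).neg.add h2
  have h5 : HasDerivAt (fun u : ℝ => Real.log (-u + Real.sqrt (u ^ 2 - E ^ 2)))
      ((-1 + x / s) / (-x + s)) x := h4.log hg.ne'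
  have hT : HasDerivAt (fun u : ℝ => -(u / E ^ 2) * Real.sqrt (u ^ 2 - E ^ 2)
      - Real.log (-u + Real.sqrt (u ^ 2 - E ^ 2)) + Real.log E)
      ((-(1 / E ^ 2) * s + -(x / E ^ 2) * (x / s)) - (-1 + x / s) / (-x + s)) x :=
    (h3.sub h5).add_const _
  have hf : HasDerivAt (auxF C a K E)
      (0 - a * (2 * x) - K * ((-(1 / E ^ 2) * s + -(x / E ^ 2) * (x / s)) - (-1 + x / s) / (-x + s))) x := by
    have ha2 : HasDerivAt (fun u : ℝ => a * u ^ 2) (a * (2 * x)) x := by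
      simpa using (hasDerivAt_pow 2 x).const_mul a
    exact ((hasDerivAt_const x C).sub ha2).sub (hT.const_mul K)
  have hE0 : E ≠ 0 := hE.ne'
  have hgne : -x + s ≠ 0 := hg.ne'
  have hb : -(1 / E ^ 2) * s + -(x / E ^ 2) * (x / s) - (-1 + x / s) / (-x + s)
      = -(2 * s / E ^ 2) := by
    have h1 : (-1 + x / s) / (-x + s) = -(1 / s) := by
      rw [div_eq_iff hgne]
      field_simp
      ring
    rw [h1]
    field_simp
    linear_combination hs2
  rw [hb] at hf
  convert hf using 1
  ring

lemma auxF_mono (C a K E : ℝ) (hE : 0 < E) (ha : 0 ≤ a) (hK : 0 ≤ K) :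
    MonotoneOn (auxF C a K E) (Iic (-E)) := by
  apply monotoneOn_of_deriv_nonneg (convex_Iic _) (auxF_contOn C a K E hE)
  · rw [interior_Iic]
    intro x hx
    exact (auxF_hasDerivAt C a K E x hE hx).differentiableAt.differentiableWithinAt
  · rw [interior_Iic]
    intro x hx
    rw [(auxF_hasDerivAt C a K E x hE hx).deriv]
    have h1 : 0 ≤ 2 * K * Real.sqrt (x ^ 2 - E ^ 2) / E ^ 2 := by positivity
    have h2 : 0 ≤ -(2 * a * x) := by nlinarith [mem_Iio.mp hx]
    linarith

theorem stmt2 (p k : ℕ) (hp : 2 ≤ p) :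
    Continuous (ThetaK p k) ∧ Monotone (ThetaK p k) ∧
    sSup (Set.range (ThetaK p k)) = (1 / 2) * Real.log (p - 1) - (p - 2) / p := by
  have hp2 : (2 : ℝ) ≤ (p : ℝ) := by exact_mod_cast hp
  have hp0 : (0 : ℝ) < p := by linarith
  have hp1 : (0 : ℝ) < (p : ℝ) - 1 := by linarith
  set E := Einf p with hEdef
  have hxq : (0 : ℝ) < ((p : ℝ) - 1) / p := div_pos hp1 hp0
  have hE : 0 < E := by
    rw [hEdef, Einf]
    exact mul_pos two_pos (Real.sqrt_pos.mpr hxq)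
  have hE2 : E ^ 2 = 4 * (((p : ℝ) - 1) / p) := by
    rw [hEdef, Einf, mul_pow, Real.sq_sqrt hxq.le]
    norm_num
  set C : ℝ := (1 / 2) * Real.log ((p : ℝ) - 1) with hC
  set a : ℝ := ((p : ℝ) - 2) / (4 * ((p : ℝ) - 1)) with hadef
  set K : ℝ := (k : ℝ) + 1 with hK
  have ha : 0 ≤ a := by
    rw [hadef]
    apply div_nonneg <;> linarith
  have hK0 : 0 ≤ K := by rw [hK]; positivity
  have haE : a * E ^ 2 = ((p : ℝ) - 2) / p := by
    rw [hadef, hE2]; field_simp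
  have hfE : auxF C a K E (-E) = C - ((p : ℝ) - 2) / p := by
    have h0 : (-E) ^ 2 - E ^ 2 = 0 := by ring
    rw [auxF, h0, Real.sqrt_zero, neg_neg, add_zero, mul_zero]
    rw [zero_sub, neg_add_cancel, mul_zero, sub_zero]
    have : (-E) ^ 2 = E ^ 2 := by ring
    rw [this, haE]
  have hrep : ∀ u, ThetaK p k u = auxF C a K E (min u (-E)) := by
    intro u
    rw [ThetaK, ← hEdef]
    split_ifs with h
    · rw [min_eq_left h, auxF, rateI1, ← hEdef]
    · rw [min_eq_right (le_of_not_ge h), hfE]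
  have hcT : Continuous (ThetaK p k) := by
    have heq : ThetaK p k = fun u => auxF C a K E (min u (-E)) := funext hrep
    rw [heq]
    exact (auxF_contOn C a K E hE).comp_continuous
      (continuous_id.min continuous_const) (fun x => mem_Iic.mpr (min_le_right _ _))
  have hmT : Monotone (ThetaK p k) := by
    intro u v huv
    rw [hrep u, hrep v]
    exact auxF_mono C a K E hE ha hK0 (mem_Iic.mpr (min_le_right _ _))
      (mem_Iic.mpr (min_le_right _ _)) (min_le_min huv le_rfl)
  refine ⟨hcT, hmT, ?_⟩
  have hgr : IsGreatest (Set.range (ThetaK p k)) ((1 / 2) * Real.log ((p : ℝ) - 1) - ((p : ℝ) - 2) / p) := by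
    constructor
    · refine ⟨0, ?_⟩
      rw [ThetaK, ← hEdef, if_neg (not_le.mpr (by linarith))]
    · rintro y ⟨u, rfl⟩
      calc ThetaK p k u ≤ ThetaK p k (max u 0) := hmT (le_max_left _ _)
        _ = _ := by
          rw [ThetaK, ← hEdef,
            if_neg (not_le.mpr (lt_of_lt_of_le (by linarith) (le_max_right u 0)))]
  exact hgr.csSup_eq
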